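/- For every finitely supported function ν from the positive integers to the non-negative integers, the inclusion O_F(ν) ↪ E⁻¹O_F becomes an isomorphism after applying E⁻¹O_F ⊗_{O_F} (−); that is, the induced map E⁻¹O_F ⊗_{O_F} O_F(ν) → E⁻¹O_F ⊗_{O_F} E⁻¹O_F ≅ E⁻¹O_F is an isomorphism of O_F-modules. (This shows the algebraic sphere S^ν is an object of the abelian model A.) -/

import Mathlib

/-! Every `c^μ` is a unit of `E⁻¹O_F`, and every `y ∈ E⁻¹O_F` satisfies `c^μ y ∈ j(O_F)` for some
finitely supported `μ`; as `j` is injective, `E⁻¹O_F` is the localization of `O_F` at the elements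
it inverts, hence flat over `O_F`, so base change keeps `O_F(ν) ↪ E⁻¹O_F` injective. It becomes
surjective because `c^μ y ∈ O_F(ν)` and `c^μ` is invertible in the coefficients `E⁻¹O_F`. -/

open LaurentPolynomial

noncomputable section

/-- The ring `O_F = ∏_{n ≥ 1} ℚ[c_n]`. -/
abbrev OF : Type := ∀ _ : ℕ+, Polynomial ℚ

/-- The product of Laurent polynomial rings `∏_{n ≥ 1} ℚ[c_n, c_n⁻¹]`. -/
abbrev LF : Type := ∀ _ : ℕ+, LaurentPolynomial ℚ

/-- The subring of `ℚ[c,c⁻¹]` of Laurent polynomials with no negative-degree terms. -/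
def polyRange : Subring (LaurentPolynomial ℚ) :=
  (Polynomial.toLaurent (R := ℚ)).range

/-- `E⁻¹O_F` : sequences of Laurent polynomials which are polynomial at all but
finitely many indices. -/
def EinvOF : Subring LF where
  carrier := {f : LF | {n : ℕ+ | f n ∉ polyRange}.Finite}
  zero_mem' := by
    refine Set.finite_empty.subset fun n hn => ?_
    simp only [Set.mem_setOf_eq, Pi.zero_apply] at hn
    exact hn (zero_mem _)
  one_mem' := by
    refine Set.finite_empty.subset fun n hn => ?_
    simp only [Set.mem_setOf_eq, Pi.one_apply] at hn
    exact hn (one_mem _)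
  add_mem' := by
    intro a b ha hb
    refine (ha.union hb).subset fun n hn => ?_
    simp only [Set.mem_setOf_eq, Pi.add_apply] at hn
    by_contra h
    simp only [Set.mem_union, Set.mem_setOf_eq, not_or, not_not] at h
    exact hn (add_mem h.1 h.2)
  mul_mem' := by
    intro a b ha hb
    refine (ha.union hb).subset fun n hn => ?_
    simp only [Set.mem_setOf_eq, Pi.mul_apply] at hn
    by_contra h
    simp only [Set.mem_union, Set.mem_setOf_eq, not_or, not_not] at h
    exact hn (mul_mem h.1 h.2)
  neg_mem' := by
    intro a ha
    refine ha.subset fun n hn => ?_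
    simp only [Set.mem_setOf_eq, Pi.neg_apply] at hn
    simp only [Set.mem_setOf_eq]
    exact fun h => hn (neg_mem h)

lemma jFull_mem (f : OF) :
    (fun n => Polynomial.toLaurent (f n) : LF) ∈ EinvOF := by
  refine Set.finite_empty.subset fun n hn => ?_
  exact hn ⟨f n, rfl⟩

/-- The evident ring homomorphism `j : O_F → E⁻¹O_F`. -/
def j : OF →+* EinvOF :=
  (Pi.ringHom fun n => (Polynomial.toLaurent (R := ℚ)).comp (Pi.evalRingHom _ n)).codRestrict
    EinvOF (fun f => jFull_mem f)

/-- `E⁻¹O_F` is an `O_F`-algebra (hence an `O_F`-module) via `j`. -/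
instance : Algebra OF EinvOF := j.toAlgebra

open TensorProduct

def cpow (ν : ℕ+ →₀ ℕ) : OF := fun n => Polynomial.X ^ ν n

/-- `j(O_F)` as an `O_F`-submodule of `E⁻¹O_F`. -/
def jRangeSub : Submodule OF EinvOF := LinearMap.range (Algebra.linearMap OF EinvOF)

/-- The `O_F`-submodule `O_F(ν) = { x ∈ E⁻¹O_F : c^ν · x ∈ j(O_F) }`. -/
def OFnu (ν : ℕ+ →₀ ℕ) : Submodule OF EinvOF :=
  Submodule.comap (LinearMap.mulLeft OF (j (cpow ν))) jRangeSub

lemma mem_OFnu (ν : ℕ+ →₀ ℕ) (x : EinvOF) :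
    x ∈ OFnu ν ↔ j (cpow ν) * x ∈ j.range := Iff.rfl

section Localization

variable {R A : Type*} [CommSemiring R] [CommSemiring A] [Algebra R A]

theorem isLocalization_comap_isUnit_of_injective (hinj : Function.Injective (algebraMap R A))
    (hsurj : ∀ a : A, ∃ r s : R, IsUnit (algebraMap R A s) ∧
      a * algebraMap R A s = algebraMap R A r) :
    IsLocalization ((IsUnit.submonoid A).comap (algebraMap R A)) A := by
  refine (isLocalization_iff _ _).mpr ⟨fun s => s.2, fun a => ?_, fun h => ?_⟩
  · obtain ⟨r, s, hs, h⟩ := hsurj a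
    exact ⟨(r, ⟨s, hs⟩), h⟩
  · exact ⟨1, congrArg _ (hinj h)⟩

theorem baseChange_subtype_bijective_of_isLocalization (S : Submonoid R) [IsLocalization S A]
    {M : Type*} [AddCommMonoid M] [Module R M] (N : Submodule R M)
    (h : ∀ m : M, ∃ s ∈ S, s • m ∈ N) :
    Function.Bijective (N.subtype.baseChange A) := by
  have := IsLocalization.flat A S
  refine ⟨?_, ?_⟩
  · rw [LinearMap.baseChange_eq_ltensor]
    exact Module.Flat.lTensor_preserves_injective_linearMap _ N.injective_subtype
  · intro z
    induction z using TensorProduct.induction_on with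
    | zero => exact ⟨0, map_zero _⟩
    | tmul a m =>
      obtain ⟨s, hs, hsm⟩ := h m
      obtain ⟨v, hv⟩ := (IsLocalization.map_units A (⟨s, hs⟩ : S)).exists_right_inv
      refine ⟨(a * v) ⊗ₜ ⟨s • m, hsm⟩, ?_⟩
      rw [LinearMap.baseChange_tmul, Submodule.subtype_apply, ← smul_tmul, Algebra.smul_def,
        mul_left_comm, hv, mul_one]
    | add z w hz hw =>
      obtain ⟨z', rfl⟩ := hz
      obtain ⟨w', rfl⟩ := hw
      exact ⟨z' + w', map_add _ _ _⟩

end Localization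

lemma j_injective : Function.Injective j := fun _ _ h =>
  funext fun n => Polynomial.toLaurent_injective (congrFun (congrArg Subtype.val h) n)

lemma isUnit_j_cpow (μ : ℕ+ →₀ ℕ) : IsUnit (j (cpow μ)) := by
  have hmem : (fun n => T (-(μ n : ℤ)) : LF) ∈ EinvOF := by
    refine μ.support.finite_toSet.subset fun n hn => ?_
    by_contra h
    rw [Finset.mem_coe, Finsupp.notMem_support_iff] at h
    exact hn ⟨1, by simp [h]⟩
  refine IsUnit.of_mul_eq_one ⟨_, hmem⟩ (Subtype.ext <| funext fun n => ?_)
  show Polynomial.toLaurent (Polynomial.X ^ μ n) * T (-(μ n : ℤ)) = 1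
  rw [Polynomial.toLaurent_X_pow, ← T_add, add_neg_cancel, T_zero]

lemma exists_toLaurent_eq_mul_T (f : LaurentPolynomial ℚ) :
    ∃ k : ℕ, (f ∈ polyRange → k = 0) ∧ ∃ p, Polynomial.toLaurent p = f * T k := by
  by_cases hf : f ∈ polyRange
  · obtain ⟨p, hp⟩ := hf
    exact ⟨0, fun _ => rfl, p, by simpa using hp⟩
  · obtain ⟨k, p, hp⟩ := f.exists_T_pow
    exact ⟨k, fun h => absurd h hf, p, hp⟩

lemma exists_j_cpow_mul_eq (y : EinvOF) : ∃ (μ : ℕ+ →₀ ℕ) (b : OF), j (cpow μ) * y = j b := by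
  classical
  choose k hk p hp using fun n => exists_toLaurent_eq_mul_T ((y : LF) n)
  have hfin : {n | (y : LF) n ∉ polyRange}.Finite := y.2
  refine ⟨Finsupp.onFinset hfin.toFinset k fun n hn => ?_, p, Subtype.ext <| funext fun n => ?_⟩
  · simpa using mt (hk n) hn
  · show Polynomial.toLaurent (Polynomial.X ^ k n) * (y : LF) n = Polynomial.toLaurent (p n)
    rw [Polynomial.toLaurent_X_pow, hp n, mul_comm]

instance : IsLocalization ((IsUnit.submonoid EinvOF).comap (algebraMap OF EinvOF)) EinvOF :=
  isLocalization_comap_isUnit_of_injective j_injective fun y => by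
    obtain ⟨μ, b, hb⟩ := exists_j_cpow_mul_eq y
    exact ⟨b, cpow μ, isUnit_j_cpow μ, by rw [mul_comm]; exact hb⟩

lemma exists_isUnit_j_smul_mem_OFnu (ν : ℕ+ →₀ ℕ) (y : EinvOF) :
    ∃ s : OF, IsUnit (j s) ∧ s • y ∈ OFnu ν := by
  obtain ⟨μ, b, hb⟩ := exists_j_cpow_mul_eq y
  refine ⟨cpow μ, isUnit_j_cpow μ, cpow ν * b, ?_⟩
  show j (cpow ν * b) = j (cpow ν) * (cpow μ • y)
  rw [Algebra.smul_def, map_mul]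
  exact congrArg (j (cpow ν) * ·) hb.symm

theorem stmt10 (ν : ℕ+ →₀ ℕ) :
    Function.Bijective (LinearMap.baseChange EinvOF (OFnu ν).subtype) :=
  baseChange_subtype_bijective_of_isLocalization
    ((IsUnit.submonoid EinvOF).comap (algebraMap OF EinvOF)) (OFnu ν)
    (exists_isUnit_j_smul_mem_OFnu ν)

end
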